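/- Let L(Θ,f) and L(Θ',f') be Schreier loops defined on K×G. Then L(Θ',f') is equivalent to L(Θ,f) — i.e. there exists a loop L which is an extension of G by K such that both L(Θ,f) and L(Θ',f') are Schreier decompositions of L with respect to G with the same underlying isomorphism κ : K → L/G — if and only if there exists a function n : K → G with n(ε) = e such that Θ'_σ = ι_{n(σ)}^{-1} ∘ Θ_σ and f'(σ,τ) = n(στ)^{-1}·f(σ,τ)·Θ_τ(n(σ))·n(τ) for all σ,τ ∈ K, where ι_r(t) = r·t·r^{-1}. -/

import Mathlib

universe u v

/-- A loop: a type with a multiplication all of whose left and right translations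
are bijective, together with a two-sided identity element. -/
class MLoop (L : Type u) extends Mul L, One L where
  mul_left_bij : ∀ x : L, Function.Bijective fun y : L => x * y
  mul_right_bij : ∀ x : L, Function.Bijective fun y : L => y * x
  one_mul : ∀ x : L, 1 * x = x
  mul_one : ∀ x : L, x * 1 = x

instance (L : Type u) [MLoop L] : Nonempty L := ⟨1⟩

/-- Left division `x \ y = λ_x⁻¹ y`. -/
noncomputable def MLoop.ldiv {L : Type u} [MLoop L] (x y : L) : L :=
  Function.invFun (fun z : L => x * z) y

/-- Right division `x / y = ρ_y⁻¹ x`. -/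
noncomputable def MLoop.rdiv {L : Type u} [MLoop L] (x y : L) : L :=
  Function.invFun (fun z : L => z * y) x

/-- Middle inner mapping `T_x = ρ_x⁻¹ ∘ λ_x`, i.e. `T_x t` is the unique `z` with
`z * x = x * t`. -/
noncomputable def MLoop.midInner {L : Type u} [MLoop L] (x t : L) : L :=
  Function.invFun (fun z : L => z * x) (x * t)

/-- The left nucleus of a multiplicative structure. -/
def leftNucleus (L : Type u) [Mul L] : Set L :=
  {u : L | ∀ x y : L, u * x * y = u * (x * y)}

/-- The right nucleus of a multiplicative structure. -/
def rightNucleus (L : Type u) [Mul L] : Set L :=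
  {u : L | ∀ x y : L, x * y * u = x * (y * u)}

/-- The middle nucleus of a multiplicative structure. -/
def middleNucleus (L : Type u) [Mul L] : Set L :=
  {u : L | ∀ x y : L, x * u * y = x * (u * y)}

/-- A subset of a loop is a normal subloop if it is the kernel of a loop homomorphism. -/
def IsNormalSubloop {L : Type u} [MLoop L] (N : Set L) : Prop :=
  ∃ (M : Type u) (i : MLoop M) (f : L → M),
    (∀ x y : L, f (x * y) = i.toMul.mul (f x) (f y)) ∧ N = {x : L | f x = i.toOne.one}

/-- The data `(Θ, f)` of a Schreier extension of the group `G` by the loop `K`. -/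
structure SchreierData (K : Type u) (G : Type v) [MLoop K] [Group G] where
  Θ : K → G ≃* G
  f : K → K → G
  theta_one : Θ 1 = MulEquiv.refl G
  f_one_left : ∀ σ : K, f 1 σ = 1
  f_one_right : ∀ σ : K, f σ 1 = 1

/-- The multiplication of the Schreier loop `L(Θ,f)` on `K × G`:
`(τ,t)∘(σ,s) = (τσ, f(τ,σ)·Θ_σ(t)·s)`. -/
def SchreierData.mul {K : Type u} {G : Type v} [MLoop K] [Group G]
    (D : SchreierData K G) (p q : K × G) : K × G :=
  (p.1 * q.1, D.f p.1 q.1 * D.Θ q.1 p.2 * q.2)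

/-!
Two Schreier decompositions `F, F'` of the same extension differ by the loop isomorphism
`Φ = F⁻¹ ∘ F' : L(Θ',f') → L(Θ,f)`. It fixes the copy `{ε} × G` of `G` pointwise and, since both
decompositions have the same underlying isomorphism `κ`, it preserves the `K`-coordinate; such a
map is a shear `(σ, g) ↦ (σ, n(σ)·g)`. Conversely, a shear is a homomorphism
`L(Θ',f') → L(Θ,f)` exactly when `n` satisfies the stated coboundary relations, and then
`id` and the shear are two Schreier decompositions of `L(Θ,f)` itself.
-/

lemma Function.bijective_prod_mk_of_bijective {α β γ δ : Type*} {e : α → γ} {g : α → β → δ}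
    (he : e.Bijective) (hg : ∀ a, (g a).Bijective) :
    Function.Bijective fun p : α × β => (e p.1, g p.1 p.2) :=
  (Equiv.prodShear (Equiv.ofBijective e he) fun a => Equiv.ofBijective (g a) (hg a)).bijective

namespace SchreierData

def shear {K : Type u} {G : Type v} [Group G] (n : K → G) : K × G ≃ K × G :=
  Equiv.prodShear (Equiv.refl K) fun σ => Equiv.mulLeft (n σ)

@[simp]
lemma shear_apply {K : Type u} {G : Type v} [Group G] (n : K → G) (p : K × G) :
    shear n p = (p.1, n p.1 * p.2) := rfl

variable {K : Type u} {G : Type v} [MLoop K] [Group G]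

section Loop

variable (D : SchreierData K G)

lemma mul_mk_one (σ : K) (c g : G) : D.mul (σ, c) (1, g) = (σ, c * g) := by
  simp [SchreierData.mul, D.f_one_right, D.theta_one, MLoop.mul_one]

lemma mul_left_bijective (p : K × G) : Function.Bijective (D.mul p) :=
  Function.bijective_prod_mk_of_bijective (MLoop.mul_left_bij p.1)
    fun σ => Group.mulLeft_bijective (D.f p.1 σ * D.Θ σ p.2)

lemma mul_right_bijective (q : K × G) : Function.Bijective fun p => D.mul p q :=
  Function.bijective_prod_mk_of_bijective (g := fun σ t => D.f σ q.1 * D.Θ q.1 t * q.2)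
    (MLoop.mul_right_bij q.1) fun σ =>
      (Group.mulRight_bijective q.2).comp
        ((Group.mulLeft_bijective (D.f σ q.1)).comp (D.Θ q.1).bijective)

abbrev loop : MLoop (K × G) where
  mul := D.mul
  one := (1, 1)
  mul_left_bij := D.mul_left_bijective
  mul_right_bij := D.mul_right_bijective
  one_mul p := show D.mul (1, 1) p = p by simp [SchreierData.mul, D.f_one_left, MLoop.one_mul]
  mul_one p := (D.mul_mk_one p.1 p.2 1).trans (by simp)

end Loop

variable (D D' : SchreierData K G)

lemma shear_map_mul_iff (n : K → G) :
    (∀ p q, shear n (D'.mul p q) = D.mul (shear n p) (shear n q)) ↔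
      n 1 = 1 ∧ (∀ (σ : K) (g : G), D'.Θ σ g = (n σ)⁻¹ * D.Θ σ g * n σ) ∧
        (∀ σ τ : K, D'.f σ τ = (n (σ * τ))⁻¹ * D.f σ τ * D.Θ τ (n σ) * n τ) := by
  have hmul : ∀ τ t σ s, shear n (D'.mul (τ, t) (σ, s)) = D.mul (shear n (τ, t)) (shear n (σ, s))
      ↔ n (τ * σ) * (D'.f τ σ * D'.Θ σ t * s) = D.f τ σ * D.Θ σ (n τ * t) * (n σ * s) := by
    simp [SchreierData.mul]
  simp only [Prod.forall, hmul]
  constructor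
  · intro h
    have hn1 : n 1 = 1 := by
      simpa [D.f_one_left, D'.f_one_left, D.theta_one, D'.theta_one, MLoop.one_mul] using h 1 1 1 1
    refine ⟨hn1, fun σ g => ?_, fun σ τ => ?_⟩
    · have h' := h 1 g σ 1
      simp only [MLoop.one_mul, D.f_one_left, D'.f_one_left, hn1, one_mul, mul_one] at h'
      rw [mul_assoc, ← h', inv_mul_cancel_left]
    · have h' := h σ 1 τ 1
      simp only [map_one, mul_one, mul_assoc] at h' ⊢
      rw [← h', inv_mul_cancel_left]
  · rintro ⟨-, hΘ, hf⟩ τ t σ s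
    rw [hf, hΘ, map_mul]
    group

section Extension

variable {D D'} {L Q : Type*} [MLoop L] [MLoop Q] {j : G → L} {π : L → Q}

lemma proj_map_eq_proj_map_one (hπ : ∀ x y, π (x * y) = π x * π y) (hπj : ∀ g, π (j g) = 1)
    {F : K × G → L} (hF : ∀ p q, F (D.mul p q) = F p * F q) (hF1 : ∀ t, F (1, t) = j t)
    (σ : K) (g : G) : π (F (σ, g)) = π (F (σ, 1)) := by
  rw [← one_mul g, ← D.mul_mk_one, hF, hπ, hF1, hπj, MLoop.mul_one]

lemma eq_shear_of_map_mul {Φ : K × G → K × G} (hΦ : ∀ p q, Φ (D'.mul p q) = D.mul (Φ p) (Φ q))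
    (hΦ1 : ∀ g, Φ (1, g) = (1, g)) (hΦfst : ∀ p, (Φ p).1 = p.1) :
    Φ = shear fun σ => (Φ (σ, 1)).2 := by
  ext1 ⟨σ, g⟩
  have hσ : Φ (σ, 1) = (σ, (Φ (σ, 1)).2) := Prod.ext (hΦfst _) rfl
  calc Φ (σ, g) = Φ (D'.mul (σ, 1) (1, g)) := by rw [D'.mul_mk_one, one_mul]
    _ = D.mul (σ, (Φ (σ, 1)).2) (1, g) := by rw [hΦ, hΦ1, ← hσ]
    _ = _ := D.mul_mk_one ..

lemma exists_shear_map_mul_of_decompositions (hπ : ∀ x y, π (x * y) = π x * π y)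
    (hker : {x : L | π x = 1} = Set.range j) {κ : K → Q} (hκ : κ.Injective) {F F' : K × G → L}
    (hF : F.Bijective) (hFmul : ∀ p q, F (D.mul p q) = F p * F q) (hF1 : ∀ t, F (1, t) = j t)
    (hF'mul : ∀ p q, F' (D'.mul p q) = F' p * F' q) (hF'1 : ∀ t, F' (1, t) = j t)
    (hπF : ∀ σ, π (F (σ, 1)) = κ σ) (hπF' : ∀ σ, π (F' (σ, 1)) = κ σ) :
    ∃ n : K → G, ∀ p q, shear n (D'.mul p q) = D.mul (shear n p) (shear n q) := by
  have hπj : ∀ g, π (j g) = 1 := fun g =>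
    (hker.symm ▸ Set.mem_range_self g : j g ∈ {x : L | π x = 1})
  let Φ := (Equiv.ofBijective F hF).symm ∘ F'
  have hFΦ : ∀ p, F (Φ p) = F' p := fun p => (Equiv.ofBijective F hF).apply_symm_apply (F' p)
  have hΦ : ∀ p q, Φ (D'.mul p q) = D.mul (Φ p) (Φ q) := fun p q =>
    hF.1 (by rw [hFΦ, hFmul, hFΦ, hFΦ, hF'mul])
  have hΦ1 : ∀ g, Φ (1, g) = (1, g) := fun g => hF.1 (by rw [hFΦ, hF'1, hF1])
  have hΦfst : ∀ p, (Φ p).1 = p.1 := fun p => hκ <| by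
    rw [← hπF, ← hπF', ← proj_map_eq_proj_map_one hπ hπj hFmul hF1 _ (Φ p).2,
      ← proj_map_eq_proj_map_one hπ hπj hF'mul hF'1, Prod.mk.eta, hFΦ]
  exact ⟨_, eq_shear_of_map_mul hΦ hΦ1 hΦfst ▸ hΦ⟩

end Extension

end SchreierData

open SchreierData in
/-- two Schreier loops `L(Θ,f)` and `L(Θ',f')` on `K × G` are equivalent —
i.e. there is a loop `L` which is an extension of `G` by `K` (with `G` embedded via `j`
as the kernel of a surjective loop homomorphism `π : L → Q` onto the factor loop) such
that both are Schreier decompositions of `L` with respect to `G` with the same underlying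
isomorphism `κ : K → L/G` — iff there is a function `n : K → G` with `n(ε) = e` such that
`Θ'_σ = ι_{n(σ)}⁻¹ ∘ Θ_σ` and `f'(σ,τ) = n(στ)⁻¹·f(σ,τ)·Θ_τ(n(σ))·n(τ)`. -/
theorem schreier_stmt19 {K G : Type u} [MLoop K] [Group G]
    (D D' : SchreierData K G) :
    (∃ (L : Type u) (iL : MLoop L) (j : G → L) (Q : Type u) (iQ : MLoop Q)
        (π : L → Q) (κ : K → Q) (F F' : K × G → L),
      Function.Injective j ∧
      (∀ s t : G, j (s * t) = iL.toMul.mul (j s) (j t)) ∧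
      (∀ x y : L, π (iL.toMul.mul x y) = iQ.toMul.mul (π x) (π y)) ∧
      Function.Surjective π ∧
      {x : L | π x = iQ.toOne.one} = Set.range j ∧
      Function.Bijective κ ∧
      (∀ a b : K, κ (a * b) = iQ.toMul.mul (κ a) (κ b)) ∧
      Function.Bijective F ∧
      (∀ p q : K × G, F (D.mul p q) = iL.toMul.mul (F p) (F q)) ∧
      (∀ t : G, F (1, t) = j t) ∧
      Function.Bijective F' ∧
      (∀ p q : K × G, F' (D'.mul p q) = iL.toMul.mul (F' p) (F' q)) ∧
      (∀ t : G, F' (1, t) = j t) ∧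
      (∀ σ : K, π (F (σ, 1)) = κ σ) ∧
      (∀ σ : K, π (F' (σ, 1)) = κ σ)) ↔
    (∃ n : K → G, n 1 = 1 ∧
      (∀ (σ : K) (g : G), D'.Θ σ g = (n σ)⁻¹ * D.Θ σ g * n σ) ∧
      (∀ σ τ : K, D'.f σ τ = (n (σ * τ))⁻¹ * D.f σ τ * D.Θ τ (n σ) * n τ)) := by
  rw [← exists_congr fun n => shear_map_mul_iff D D' n]
  constructor
  · rintro ⟨L, iL, j, Q, iQ, π, κ, F, F', -, -, hπ, -, hker, hκ, -, hF, hFmul, hF1, -, hF'mul,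
      hF'1, hπF, hπF'⟩
    exact exists_shear_map_mul_of_decompositions hπ hker hκ.1 hF hFmul hF1 hF'mul hF'1 hπF hπF'
  · rintro ⟨n, hn⟩
    have hn1 := ((shear_map_mul_iff D D' n).1 hn).1
    refine ⟨K × G, D.loop, fun t => (1, t), K, inferInstance, Prod.fst, id, id, shear n,
      fun s t h => congrArg Prod.snd h, fun s t => (D.mul_mk_one 1 s t).symm, fun _ _ => rfl,
      Prod.fst_surjective, ?_, Function.bijective_id, fun _ _ => rfl, Function.bijective_id,
      fun _ _ => rfl, fun _ => rfl, (shear n).bijective, hn, fun t => ?_, fun _ => rfl,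
      fun _ => rfl⟩
    · ext ⟨σ, t⟩
      exact ⟨fun h => ⟨t, Prod.ext h.symm rfl⟩, fun ⟨_, h⟩ => (congrArg Prod.fst h).symm⟩
    · simp [hn1]
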